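/- In the dynamic programming over the solution graph, the dominance pruning is sound: if path P_1 to node V reaches it with time T_1 ≤ T_2 and cost C_1 ≤ C_2 compared to path P_2, then for any extension of P_2 to a feasible complete path, the same extension applied to P_1 is also feasible (respects all time windows, given edge durations are nonnegative and arrival times use max with window lower bounds) and has cost no greater. -/

import Mathlib

open Finset

/-- Arrival time recursion along an extension: starting from time `T0` at level `s`,
with edge durations `t`, `arrival γ s t T0 k` is the arrival time at level `s + k`. -/
def arrival (γ : ℝ) (s : ℕ) (t : ℕ → ℝ) (T0 : ℝ) : ℕ → ℝ
  | 0 => T0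
  | k + 1 => max (arrival γ s t T0 k + t k) (((s : ℝ) + (k : ℝ) + 1) * γ)

lemma arrival_mono (γ : ℝ) (s : ℕ) (t : ℕ → ℝ) {T₁ T₂ : ℝ} (h : T₁ ≤ T₂) :
    ∀ k, arrival γ s t T₁ k ≤ arrival γ s t T₂ k
  | 0 => h
  | k + 1 => by
    simp only [arrival]
    exact max_le_max (add_le_add_left (arrival_mono γ s t h k) _) le_rfl

lemma arrival_lb (γ : ℝ) (s : ℕ) (t : ℕ → ℝ) {T : ℝ} (h : (s : ℝ) * γ ≤ T) :
    ∀ k : ℕ, ((s : ℝ) + (k : ℝ)) * γ ≤ arrival γ s t T k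
  | 0 => by simpa [arrival] using h
  | k + 1 => by
    simp only [arrival]
    refine le_max_of_le_right (le_of_eq ?_)
    push_cast
    ring

theorem dominance_pruning_sound (γ Twin : ℝ) (s : ℕ) (t c : ℕ → ℝ)
    (ht : ∀ k, 0 ≤ t k)
    (T₁ T₂ C₁ C₂ : ℝ) (hT : T₁ ≤ T₂) (hC : C₁ ≤ C₂)
    (hfeas1 : (s : ℝ) * γ ≤ T₁ ∧ T₁ ≤ (s : ℝ) * γ + Twin)
    (N : ℕ)
    (hfeas2 : ∀ k ≤ N, ((s : ℝ) + (k : ℝ)) * γ ≤ arrival γ s t T₂ k ∧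
      arrival γ s t T₂ k ≤ ((s : ℝ) + (k : ℝ)) * γ + Twin) :
    (∀ k ≤ N, ((s : ℝ) + (k : ℝ)) * γ ≤ arrival γ s t T₁ k ∧
      arrival γ s t T₁ k ≤ ((s : ℝ) + (k : ℝ)) * γ + Twin) ∧
    C₁ + ∑ k ∈ Finset.range N, c k ≤ C₂ + ∑ k ∈ Finset.range N, c k := by
  refine ⟨fun k hk => ⟨arrival_lb γ s t hfeas1.1 k, ?_⟩, add_le_add_left hC _⟩
  exact le_trans (arrival_mono γ s t hT k) (hfeas2 k hk).2
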